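/- Let α ∈ (0,1], b > 0, q continuous on [0,b] with λ + q(t) bounded, and suppose M·b^{2α}·(1 + 1)/Γ(α+1)² < 1 where M = sup_{t∈[0,b]} |λ + q(t)|. Then the integral equation f(t) + I_{0+}^α I_{b-}^α[(λ+q)f](t) - (t/b)^α (I_{0+}^α I_{b-}^α[(λ+q)f])(b) = L (t/b)^α has a unique continuous solution f on [0,b], obtained as the fixed point of a contraction on C[0,b]. -/
import Mathlib


open MeasureTheory intervalIntegral Set

/-- Left Riemann–Liouville fractional integral of order `α > 0`. -/
noncomputable def leftRLInt (α : ℝ) (f : ℝ → ℝ) (t : ℝ) : ℝ :=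
  (1 / Real.Gamma α) * ∫ τ in (0:ℝ)..t, f τ * (t - τ) ^ (α - 1)

/-- Right Riemann–Liouville fractional integral of order `α > 0` on `[·,b]`. -/
noncomputable def rightRLInt (α b : ℝ) (f : ℝ → ℝ) (t : ℝ) : ℝ :=
  (1 / Real.Gamma α) * ∫ τ in t..b, f τ * (τ - t) ^ (α - 1)

section aux
variable {α : ℝ}


lemma kernel_int_left (hα : 0 < α) (u s t : ℝ) :
    IntervalIntegrable (fun τ => (u - τ) ^ (α - 1)) volume s t := by
  have h := intervalIntegrable_rpow' (a := u - s) (b := u - t) (show (-1:ℝ) < α - 1 by linarith)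
  have := h.comp_sub_left u
  simpa using this

lemma kernel_int_right (hα : 0 < α) (u s t : ℝ) :
    IntervalIntegrable (fun τ => (τ - u) ^ (α - 1)) volume s t := by
  have h := intervalIntegrable_rpow' (a := s - u) (b := t - u) (show (-1:ℝ) < α - 1 by linarith)
  have := h.comp_sub_right u
  simpa using this

lemma integral_kernel_left (hα : 0 < α) (u s t : ℝ) :
    ∫ τ in s..t, (u - τ) ^ (α - 1) = ((u - s) ^ α - (u - t) ^ α) / α := by
  have h := intervalIntegral.integral_comp_sub_left (a := s) (b := t)
    (fun x => x ^ (α - 1)) u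
  rw [h, integral_rpow (Or.inl (show (-1:ℝ) < α - 1 by linarith)),
    show α - 1 + 1 = α by ring]

lemma integral_kernel_right (hα : 0 < α) (u s t : ℝ) :
    ∫ τ in s..t, (τ - u) ^ (α - 1) = ((t - u) ^ α - (s - u) ^ α) / α := by
  have h := intervalIntegral.integral_comp_sub_right (a := s) (b := t)
    (fun x => x ^ (α - 1)) u
  rw [h, integral_rpow (Or.inl (show (-1:ℝ) < α - 1 by linarith)),
    show α - 1 + 1 = α by ring]

lemma prod_int_left (hα : 0 < α) {h : ℝ → ℝ} {s t : ℝ} (u : ℝ)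
    (hh : ContinuousOn h (Set.uIcc s t)) :
    IntervalIntegrable (fun τ => h τ * (u - τ) ^ (α - 1)) volume s t :=
  (kernel_int_left hα u s t).continuousOn_mul hh

lemma prod_int_right (hα : 0 < α) {h : ℝ → ℝ} {s t : ℝ} (u : ℝ)
    (hh : ContinuousOn h (Set.uIcc s t)) :
    IntervalIntegrable (fun τ => h τ * (τ - u) ^ (α - 1)) volume s t :=
  (kernel_int_right hα u s t).continuousOn_mul hh

lemma bound_left (hα : 0 < α) {h : ℝ → ℝ} {s t C : ℝ} (hst : s ≤ t)
    (hh : ContinuousOn h (Icc s t)) (hC : ∀ τ ∈ Icc s t, |h τ| ≤ C) :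
    |∫ τ in s..t, h τ * (t - τ) ^ (α - 1)| ≤ C * ((t - s) ^ α / α) := by
  have hker := kernel_int_left hα t s t
  have hprod := prod_int_left hα (s := s) (t := t) t (by rwa [uIcc_of_le hst])
  calc |∫ τ in s..t, h τ * (t - τ) ^ (α - 1)|
      ≤ ∫ τ in s..t, |h τ * (t - τ) ^ (α - 1)| := abs_integral_le_integral_abs hst
    _ ≤ ∫ τ in s..t, C * (t - τ) ^ (α - 1) := by
        refine integral_mono_on hst hprod.abs (hker.const_mul C) (fun x hx => ?_)
        have hk : (0:ℝ) ≤ (t - x) ^ (α - 1) := Real.rpow_nonneg (by linarith [hx.2]) _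
        rw [abs_mul, abs_of_nonneg hk]
        exact mul_le_mul_of_nonneg_right (hC x hx) hk
    _ = C * ((t - s) ^ α / α) := by
        rw [intervalIntegral.integral_const_mul, integral_kernel_left hα, sub_self,
          Real.zero_rpow (ne_of_gt hα), sub_zero]

lemma bound_right (hα : 0 < α) {h : ℝ → ℝ} {t c C : ℝ} (htc : t ≤ c)
    (hh : ContinuousOn h (Icc t c)) (hC : ∀ τ ∈ Icc t c, |h τ| ≤ C) :
    |∫ τ in t..c, h τ * (τ - t) ^ (α - 1)| ≤ C * ((c - t) ^ α / α) := by
  have hker := kernel_int_right hα t t c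
  have hprod := prod_int_right hα (s := t) (t := c) t (by rwa [uIcc_of_le htc])
  calc |∫ τ in t..c, h τ * (τ - t) ^ (α - 1)|
      ≤ ∫ τ in t..c, |h τ * (τ - t) ^ (α - 1)| := abs_integral_le_integral_abs htc
    _ ≤ ∫ τ in t..c, C * (τ - t) ^ (α - 1) := by
        refine integral_mono_on htc hprod.abs (hker.const_mul C) (fun x hx => ?_)
        have hk : (0:ℝ) ≤ (x - t) ^ (α - 1) := Real.rpow_nonneg (by linarith [hx.1]) _
        rw [abs_mul, abs_of_nonneg hk]
        exact mul_le_mul_of_nonneg_right (hC x hx) hk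
    _ = C * ((c - t) ^ α / α) := by
        rw [intervalIntegral.integral_const_mul, integral_kernel_right hα, sub_self,
          Real.zero_rpow (ne_of_gt hα), sub_zero]

lemma continuousOn_of_holder {f : ℝ → ℝ} {s : Set ℝ} {K a : ℝ} (ha : 0 < a)
    (h : ∀ x ∈ s, ∀ y ∈ s, x ≤ y → |f x - f y| ≤ K * (y - x) ^ a) :
    ContinuousOn f s := by
  rw [Metric.continuousOn_iff]
  intro x hx ε hε
  set K' : ℝ := max K 1 with hK'
  have hK'pos : 0 < K' := lt_of_lt_of_le one_pos (le_max_right _ _)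
  have hq : 0 < ε / K' := div_pos hε hK'pos
  refine ⟨(ε / K') ^ (1 / a), Real.rpow_pos_of_pos hq _, fun y hy hd => ?_⟩
  have key : ∀ u v : ℝ, u ∈ s → v ∈ s → u ≤ v → v - u < (ε / K') ^ (1 / a) →
      |f u - f v| < ε := by
    intro u v hu hv huv hlt
    calc |f u - f v| ≤ K * (v - u) ^ a := h u hu v hv huv
      _ ≤ K' * (v - u) ^ a := by
          exact mul_le_mul_of_nonneg_right (le_max_left _ _) (Real.rpow_nonneg (by linarith) _)
      _ < K' * ((ε / K') ^ (1 / a)) ^ a := by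
          refine mul_lt_mul_of_pos_left ?_ hK'pos
          exact Real.rpow_lt_rpow (by linarith) hlt ha
      _ = ε := by
          rw [← Real.rpow_mul hq.le, one_div_mul_cancel (ne_of_gt ha), Real.rpow_one]
          field_simp
  rw [Real.dist_eq] at hd ⊢
  rcases le_total y x with hyx | hxy
  · have h1 : x - y < (ε / K') ^ (1 / a) :=
      lt_of_le_of_lt (le_abs_self _) (by rwa [abs_sub_comm] at hd)
    exact key y x hy hx hyx h1
  · have h1 : y - x < (ε / K') ^ (1 / a) :=
      lt_of_le_of_lt (le_abs_self _) hd
    have := key x y hx hy hxy h1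
    rwa [abs_sub_comm] at this

lemma ae_ne_restrict (s : ℝ) (S : Set ℝ) : ∀ᵐ τ ∂(volume.restrict S), τ ≠ s := by
  refine ae_restrict_of_ae ?_
  rw [ae_iff]
  have h : {τ : ℝ | ¬ τ ≠ s} = {s} := by ext τ; simp [not_not]
  rw [h]; exact Real.volume_singleton

lemma holder_right (hα0 : 0 < α) (hα1 : α ≤ 1) {h : ℝ → ℝ} {C b' : ℝ}
    (hh : Continuous h) (hC : ∀ τ ∈ Icc 0 b', |h τ| ≤ C) {t s : ℝ}
    (ht : t ∈ Icc 0 b') (hs : s ∈ Icc 0 b') (hts : t ≤ s) :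
    |(∫ τ in t..b', h τ * (τ - t) ^ (α - 1))
      - ∫ τ in s..b', h τ * (τ - s) ^ (α - 1)| ≤ 2 * C * ((s - t) ^ α / α) := by
  have hsb : s ≤ b' := hs.2
  have C0 : 0 ≤ C := le_trans (abs_nonneg _) (hC t ht)
  have I1 : IntervalIntegrable (fun τ => h τ * (τ - t) ^ (α - 1)) volume t s :=
    prod_int_right hα0 t hh.continuousOn
  have I2 : IntervalIntegrable (fun τ => h τ * (τ - t) ^ (α - 1)) volume s b' :=
    prod_int_right hα0 t hh.continuousOn
  have I3 : IntervalIntegrable (fun τ => h τ * (τ - s) ^ (α - 1)) volume s b' :=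
    prod_int_right hα0 s hh.continuousOn
  have hsplit : (∫ τ in t..b', h τ * (τ - t) ^ (α - 1))
      = (∫ τ in t..s, h τ * (τ - t) ^ (α - 1)) + ∫ τ in s..b', h τ * (τ - t) ^ (α - 1) :=
    (integral_add_adjacent_intervals I1 I2).symm
  have hsub : (∫ τ in s..b', h τ * (τ - t) ^ (α - 1)) - ∫ τ in s..b', h τ * (τ - s) ^ (α - 1)
      = ∫ τ in s..b', (h τ * (τ - t) ^ (α - 1) - h τ * (τ - s) ^ (α - 1)) :=
    (intervalIntegral.integral_sub I2 I3).symm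
  have A1 : |∫ τ in t..s, h τ * (τ - t) ^ (α - 1)| ≤ C * ((s - t) ^ α / α) :=
    bound_right hα0 hts hh.continuousOn
      (fun τ hτ => hC τ ⟨le_trans ht.1 hτ.1, le_trans hτ.2 hsb⟩)
  -- second piece
  have hI : IntervalIntegrable
      (fun τ => h τ * (τ - t) ^ (α - 1) - h τ * (τ - s) ^ (α - 1)) volume s b' := I2.sub I3
  have hg : IntervalIntegrable
      (fun τ => C * ((τ - s) ^ (α - 1) - (τ - t) ^ (α - 1))) volume s b' :=
    ((kernel_int_right hα0 s s b').sub (kernel_int_right hα0 t s b')).const_mul C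
  have hae : (fun τ => |h τ * (τ - t) ^ (α - 1) - h τ * (τ - s) ^ (α - 1)|)
      ≤ᵐ[volume.restrict (Icc s b')]
      (fun τ => C * ((τ - s) ^ (α - 1) - (τ - t) ^ (α - 1))) := by
    filter_upwards [ae_ne_restrict s (Icc s b'), ae_restrict_mem measurableSet_Icc]
      with τ hne hmem
    have hsτ : s < τ := lt_of_le_of_ne hmem.1 (Ne.symm hne)
    have hle : (τ - t) ^ (α - 1) ≤ (τ - s) ^ (α - 1) :=
      Real.rpow_le_rpow_of_nonpos (by linarith) (by linarith) (by linarith)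
    have hnn : 0 ≤ (τ - s) ^ (α - 1) - (τ - t) ^ (α - 1) := by linarith
    have habs : |h τ * (τ - t) ^ (α - 1) - h τ * (τ - s) ^ (α - 1)|
        = |h τ| * ((τ - s) ^ (α - 1) - (τ - t) ^ (α - 1)) := by
      rw [← mul_sub, abs_mul, abs_of_nonpos (by linarith : (τ-t)^(α-1) - (τ-s)^(α-1) ≤ 0),
        neg_sub]
    rw [habs]
    exact mul_le_mul_of_nonneg_right (hC τ ⟨le_trans (le_trans ht.1 hts) hmem.1, hmem.2⟩) hnn
  have A2 : |∫ τ in s..b', (h τ * (τ - t) ^ (α - 1) - h τ * (τ - s) ^ (α - 1))|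
      ≤ C * ((s - t) ^ α / α) := by
    have step1 := abs_integral_le_integral_abs (f := fun τ =>
      h τ * (τ - t) ^ (α - 1) - h τ * (τ - s) ^ (α - 1)) (μ := volume) hsb
    have step2 := integral_mono_ae_restrict hsb hI.abs hg hae
    have step3 : (∫ τ in s..b', C * ((τ - s) ^ (α - 1) - (τ - t) ^ (α - 1)))
        = C * (((b' - s) ^ α - (b' - t) ^ α + (s - t) ^ α) / α) := by
      rw [intervalIntegral.integral_const_mul,
        intervalIntegral.integral_sub (kernel_int_right hα0 s s b') (kernel_int_right hα0 t s b'),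
        integral_kernel_right hα0, integral_kernel_right hα0, sub_self,
        Real.zero_rpow (ne_of_gt hα0)]
      ring
    have hmono : (b' - s) ^ α ≤ (b' - t) ^ α :=
      Real.rpow_le_rpow (by linarith) (by linarith) hα0.le
    calc |∫ τ in s..b', (h τ * (τ - t) ^ (α - 1) - h τ * (τ - s) ^ (α - 1))|
        ≤ ∫ τ in s..b', |h τ * (τ - t) ^ (α - 1) - h τ * (τ - s) ^ (α - 1)| := step1
      _ ≤ ∫ τ in s..b', C * ((τ - s) ^ (α - 1) - (τ - t) ^ (α - 1)) := step2
      _ = C * (((b' - s) ^ α - (b' - t) ^ α + (s - t) ^ α) / α) := step3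
      _ ≤ C * ((s - t) ^ α / α) := by
          gcongr
          linarith
  calc |(∫ τ in t..b', h τ * (τ - t) ^ (α - 1)) - ∫ τ in s..b', h τ * (τ - s) ^ (α - 1)|
      = |(∫ τ in t..s, h τ * (τ - t) ^ (α - 1))
          + ∫ τ in s..b', (h τ * (τ - t) ^ (α - 1) - h τ * (τ - s) ^ (α - 1))| := by
        rw [hsplit, add_sub_assoc, hsub]
    _ ≤ |∫ τ in t..s, h τ * (τ - t) ^ (α - 1)|
          + |∫ τ in s..b', (h τ * (τ - t) ^ (α - 1) - h τ * (τ - s) ^ (α - 1))| := abs_add_le _ _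
    _ ≤ C * ((s - t) ^ α / α) + C * ((s - t) ^ α / α) := add_le_add A1 A2
    _ = 2 * C * ((s - t) ^ α / α) := by ring

lemma holder_left (hα0 : 0 < α) (hα1 : α ≤ 1) {g : ℝ → ℝ} {C b' : ℝ}
    (hg : ContinuousOn g (Icc 0 b')) (hC : ∀ τ ∈ Icc 0 b', |g τ| ≤ C) {t s : ℝ}
    (ht : t ∈ Icc 0 b') (hs : s ∈ Icc 0 b') (hts : t ≤ s) :
    |(∫ τ in (0:ℝ)..s, g τ * (s - τ) ^ (α - 1))
      - ∫ τ in (0:ℝ)..t, g τ * (t - τ) ^ (α - 1)| ≤ 2 * C * ((s - t) ^ α / α) := by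
  have h0t : (0:ℝ) ≤ t := ht.1
  have hsb : s ≤ b' := hs.2
  have C0 : 0 ≤ C := le_trans (abs_nonneg _) (hC t ht)
  have hsubIcc : Icc (0:ℝ) t ⊆ Icc 0 b' := Icc_subset_Icc le_rfl (le_trans hts hsb)
  have hsubIcc2 : Icc t s ⊆ Icc 0 b' := Icc_subset_Icc h0t hsb
  have hg1 : ContinuousOn g (Set.uIcc 0 t) := by rw [uIcc_of_le h0t]; exact hg.mono hsubIcc
  have hg2 : ContinuousOn g (Set.uIcc t s) := by rw [uIcc_of_le hts]; exact hg.mono hsubIcc2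
  have I1 : IntervalIntegrable (fun τ => g τ * (t - τ) ^ (α - 1)) volume 0 t :=
    prod_int_left hα0 t hg1
  have I2 : IntervalIntegrable (fun τ => g τ * (s - τ) ^ (α - 1)) volume 0 t :=
    prod_int_left hα0 s hg1
  have I3 : IntervalIntegrable (fun τ => g τ * (s - τ) ^ (α - 1)) volume t s :=
    prod_int_left hα0 s hg2
  have hsplit : (∫ τ in (0:ℝ)..s, g τ * (s - τ) ^ (α - 1))
      = (∫ τ in (0:ℝ)..t, g τ * (s - τ) ^ (α - 1)) + ∫ τ in t..s, g τ * (s - τ) ^ (α - 1) :=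
    (integral_add_adjacent_intervals I2 I3).symm
  have hsub : (∫ τ in (0:ℝ)..t, g τ * (s - τ) ^ (α - 1))
        - ∫ τ in (0:ℝ)..t, g τ * (t - τ) ^ (α - 1)
      = ∫ τ in (0:ℝ)..t, (g τ * (s - τ) ^ (α - 1) - g τ * (t - τ) ^ (α - 1)) :=
    (intervalIntegral.integral_sub I2 I1).symm
  have A1 : |∫ τ in t..s, g τ * (s - τ) ^ (α - 1)| ≤ C * ((s - t) ^ α / α) :=
    bound_left hα0 hts (hg.mono hsubIcc2) (fun τ hτ => hC τ (hsubIcc2 hτ))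
  have hI : IntervalIntegrable
      (fun τ => g τ * (s - τ) ^ (α - 1) - g τ * (t - τ) ^ (α - 1)) volume 0 t := I2.sub I1
  have hgk : IntervalIntegrable
      (fun τ => C * ((t - τ) ^ (α - 1) - (s - τ) ^ (α - 1))) volume 0 t :=
    ((kernel_int_left hα0 t 0 t).sub (kernel_int_left hα0 s 0 t)).const_mul C
  have hae : (fun τ => |g τ * (s - τ) ^ (α - 1) - g τ * (t - τ) ^ (α - 1)|)
      ≤ᵐ[volume.restrict (Icc (0:ℝ) t)]
      (fun τ => C * ((t - τ) ^ (α - 1) - (s - τ) ^ (α - 1))) := by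
    filter_upwards [ae_ne_restrict t (Icc (0:ℝ) t), ae_restrict_mem measurableSet_Icc]
      with τ hne hmem
    have hτt : τ < t := lt_of_le_of_ne hmem.2 hne
    have hle : (s - τ) ^ (α - 1) ≤ (t - τ) ^ (α - 1) :=
      Real.rpow_le_rpow_of_nonpos (by linarith) (by linarith) (by linarith)
    have hnn : 0 ≤ (t - τ) ^ (α - 1) - (s - τ) ^ (α - 1) := by linarith
    have habs : |g τ * (s - τ) ^ (α - 1) - g τ * (t - τ) ^ (α - 1)|
        = |g τ| * ((t - τ) ^ (α - 1) - (s - τ) ^ (α - 1)) := by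
      rw [← mul_sub, abs_mul, abs_of_nonpos (by linarith : (s-τ)^(α-1) - (t-τ)^(α-1) ≤ 0),
        neg_sub]
    rw [habs]
    exact mul_le_mul_of_nonneg_right (hC τ (hsubIcc hmem)) hnn
  have A2 : |∫ τ in (0:ℝ)..t, (g τ * (s - τ) ^ (α - 1) - g τ * (t - τ) ^ (α - 1))|
      ≤ C * ((s - t) ^ α / α) := by
    have step1 := abs_integral_le_integral_abs (f := fun τ =>
      g τ * (s - τ) ^ (α - 1) - g τ * (t - τ) ^ (α - 1)) (μ := volume) h0t
    have step2 := integral_mono_ae_restrict h0t hI.abs hgk hae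
    have step3 : (∫ τ in (0:ℝ)..t, C * ((t - τ) ^ (α - 1) - (s - τ) ^ (α - 1)))
        = C * ((t ^ α - s ^ α + (s - t) ^ α) / α) := by
      rw [intervalIntegral.integral_const_mul,
        intervalIntegral.integral_sub (kernel_int_left hα0 t 0 t) (kernel_int_left hα0 s 0 t),
        integral_kernel_left hα0, integral_kernel_left hα0, sub_self,
        Real.zero_rpow (ne_of_gt hα0), sub_zero, sub_zero]
      ring
    have hmono : t ^ α ≤ s ^ α := Real.rpow_le_rpow h0t hts hα0.le
    calc |∫ τ in (0:ℝ)..t, (g τ * (s - τ) ^ (α - 1) - g τ * (t - τ) ^ (α - 1))|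
        ≤ ∫ τ in (0:ℝ)..t, |g τ * (s - τ) ^ (α - 1) - g τ * (t - τ) ^ (α - 1)| := step1
      _ ≤ ∫ τ in (0:ℝ)..t, C * ((t - τ) ^ (α - 1) - (s - τ) ^ (α - 1)) := step2
      _ = C * ((t ^ α - s ^ α + (s - t) ^ α) / α) := step3
      _ ≤ C * ((s - t) ^ α / α) := by
          gcongr
          linarith
  calc |(∫ τ in (0:ℝ)..s, g τ * (s - τ) ^ (α - 1)) - ∫ τ in (0:ℝ)..t, g τ * (t - τ) ^ (α - 1)|
      = |(∫ τ in (0:ℝ)..t, (g τ * (s - τ) ^ (α - 1) - g τ * (t - τ) ^ (α - 1)))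
          + ∫ τ in t..s, g τ * (s - τ) ^ (α - 1)| := by
        rw [hsplit, ← hsub]; congr 1; ring
    _ ≤ |∫ τ in (0:ℝ)..t, (g τ * (s - τ) ^ (α - 1) - g τ * (t - τ) ^ (α - 1))|
          + |∫ τ in t..s, g τ * (s - τ) ^ (α - 1)| := abs_add_le _ _
    _ ≤ C * ((s - t) ^ α / α) + C * ((s - t) ^ α / α) := add_le_add A2 A1
    _ = 2 * C * ((s - t) ^ α / α) := by ring

variable {b M c0 : ℝ} {Q h : ℝ → ℝ}

lemma Rfun_bound (hα0 : 0 < α) (hb : 0 < b)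
    (hQc : Continuous Q) (hQb : ∀ u, |Q u| ≤ M)
    (hh : Continuous h) (hc0 : ∀ u, |h u| ≤ c0) :
    ∀ s ∈ Icc (0:ℝ) b, |rightRLInt α b (fun u => Q u * h u) s|
      ≤ M * c0 * b ^ α / (Real.Gamma α * α) := by
  intro s hs
  have hΓ : 0 < Real.Gamma α := Real.Gamma_pos_of_pos hα0
  have hM0 : 0 ≤ M := le_trans (abs_nonneg _) (hQb 0)
  have hc00 : 0 ≤ c0 := le_trans (abs_nonneg _) (hc0 0)
  have hbd : ∀ τ ∈ Icc s b, |Q τ * h τ| ≤ M * c0 := fun τ _ => by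
    rw [abs_mul]; exact mul_le_mul (hQb τ) (hc0 τ) (abs_nonneg _) hM0
  have h1 : |∫ τ in s..b, (Q τ * h τ) * (τ - s) ^ (α - 1)| ≤ M * c0 * ((b - s) ^ α / α) :=
    bound_right hα0 hs.2 (hQc.mul hh).continuousOn hbd
  have h2 : (b - s) ^ α ≤ b ^ α := Real.rpow_le_rpow (by linarith [hs.2]) (by linarith [hs.1]) hα0.le
  have : |rightRLInt α b (fun u => Q u * h u) s|
      = (1 / Real.Gamma α) * |∫ τ in s..b, (Q τ * h τ) * (τ - s) ^ (α - 1)| := by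
    rw [rightRLInt, abs_mul, abs_of_nonneg (by positivity : (0:ℝ) ≤ 1 / Real.Gamma α)]
  rw [this]
  calc (1 / Real.Gamma α) * |∫ τ in s..b, (Q τ * h τ) * (τ - s) ^ (α - 1)|
      ≤ (1 / Real.Gamma α) * (M * c0 * ((b - s) ^ α / α)) := by
        exact mul_le_mul_of_nonneg_left h1 (by positivity)
    _ ≤ (1 / Real.Gamma α) * (M * c0 * (b ^ α / α)) := by gcongr
    _ = M * c0 * b ^ α / (Real.Gamma α * α) := by field_simp

lemma Rfun_continuousOn (hα0 : 0 < α) (hα1 : α ≤ 1) (hb : 0 < b)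
    (hQc : Continuous Q) (hQb : ∀ u, |Q u| ≤ M)
    (hh : Continuous h) (hc0 : ∀ u, |h u| ≤ c0) :
    ContinuousOn (rightRLInt α b (fun u => Q u * h u)) (Icc (0:ℝ) b) := by
  have hΓ : 0 < Real.Gamma α := Real.Gamma_pos_of_pos hα0
  have hM0 : 0 ≤ M := le_trans (abs_nonneg _) (hQb 0)
  have hbd : ∀ τ ∈ Icc (0:ℝ) b, |Q τ * h τ| ≤ M * c0 := fun τ _ => by
    rw [abs_mul]
    exact mul_le_mul (hQb τ) (hc0 τ) (abs_nonneg _) hM0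
  refine continuousOn_of_holder hα0 (K := (1 / Real.Gamma α) * (2 * (M * c0) / α)) ?_
  intro t ht s hs hts
  have key := holder_right hα0 hα1 (hQc.mul hh) hbd ht hs hts
  have : rightRLInt α b (fun u => Q u * h u) t - rightRLInt α b (fun u => Q u * h u) s
      = (1 / Real.Gamma α) * ((∫ τ in t..b, (Q τ * h τ) * (τ - t) ^ (α - 1))
          - ∫ τ in s..b, (Q τ * h τ) * (τ - s) ^ (α - 1)) := by
    rw [rightRLInt, rightRLInt]; ring
  rw [this, abs_mul, abs_of_nonneg (by positivity : (0:ℝ) ≤ 1 / Real.Gamma α)]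
  calc (1 / Real.Gamma α) * |(∫ τ in t..b, (Q τ * h τ) * (τ - t) ^ (α - 1))
          - ∫ τ in s..b, (Q τ * h τ) * (τ - s) ^ (α - 1)|
      ≤ (1 / Real.Gamma α) * (2 * (M * c0) * ((s - t) ^ α / α)) :=
        mul_le_mul_of_nonneg_left key (by positivity)
    _ = (1 / Real.Gamma α) * (2 * (M * c0) / α) * (s - t) ^ α := by ring

lemma Afun_bound (hα0 : 0 < α) (hα1 : α ≤ 1) (hb : 0 < b)
    (hQc : Continuous Q) (hQb : ∀ u, |Q u| ≤ M)
    (hh : Continuous h) (hc0 : ∀ u, |h u| ≤ c0) :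
    ∀ t ∈ Icc (0:ℝ) b,
      |leftRLInt α (rightRLInt α b (fun u => Q u * h u)) t|
        ≤ M * c0 * b ^ (2 * α) / (Real.Gamma (α + 1)) ^ 2 := by
  intro t ht
  have hΓ : 0 < Real.Gamma α := Real.Gamma_pos_of_pos hα0
  have hM0 : 0 ≤ M := le_trans (abs_nonneg _) (hQb 0)
  have hc00 : 0 ≤ c0 := le_trans (abs_nonneg _) (hc0 0)
  set CR := M * c0 * b ^ α / (Real.Gamma α * α) with hCR
  have hCR0 : 0 ≤ CR := by positivity
  have hsub : Icc 0 t ⊆ Icc (0:ℝ) b := Icc_subset_Icc le_rfl ht.2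
  have hRb := Rfun_bound (Q := Q) (h := h) hα0 hb hQc hQb hh hc0
  have hRc := Rfun_continuousOn (Q := Q) (h := h) hα0 hα1 hb hQc hQb hh hc0
  have h1 : |∫ s in (0:ℝ)..t, rightRLInt α b (fun u => Q u * h u) s * (t - s) ^ (α - 1)|
      ≤ CR * (t ^ α / α) := by
    have := bound_left hα0 (h := rightRLInt α b (fun u => Q u * h u)) ht.1
      (hRc.mono hsub) (fun τ hτ => hRb τ (hsub hτ))
    simpa using this
  have h2 : t ^ α ≤ b ^ α := Real.rpow_le_rpow ht.1 ht.2 hα0.le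
  have hgam : Real.Gamma (α + 1) = α * Real.Gamma α := Real.Gamma_add_one (ne_of_gt hα0)
  have hb2 : b ^ (2 * α) = b ^ α * b ^ α := by
    rw [two_mul, Real.rpow_add hb]
  have : |leftRLInt α (rightRLInt α b (fun u => Q u * h u)) t|
      = (1 / Real.Gamma α)
        * |∫ s in (0:ℝ)..t, rightRLInt α b (fun u => Q u * h u) s * (t - s) ^ (α - 1)| := by
    rw [leftRLInt, abs_mul, abs_of_nonneg (by positivity : (0:ℝ) ≤ 1 / Real.Gamma α)]
  rw [this]
  calc (1 / Real.Gamma α)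
        * |∫ s in (0:ℝ)..t, rightRLInt α b (fun u => Q u * h u) s * (t - s) ^ (α - 1)|
      ≤ (1 / Real.Gamma α) * (CR * (t ^ α / α)) := mul_le_mul_of_nonneg_left h1 (by positivity)
    _ ≤ (1 / Real.Gamma α) * (CR * (b ^ α / α)) := by gcongr
    _ = M * c0 * b ^ (2 * α) / (Real.Gamma (α + 1)) ^ 2 := by
        rw [hb2, hCR, hgam]; field_simp

lemma Afun_continuousOn (hα0 : 0 < α) (hα1 : α ≤ 1) (hb : 0 < b)
    (hQc : Continuous Q) (hQb : ∀ u, |Q u| ≤ M)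
    (hh : Continuous h) (hc0 : ∀ u, |h u| ≤ c0) :
    ContinuousOn (leftRLInt α (rightRLInt α b (fun u => Q u * h u))) (Icc (0:ℝ) b) := by
  have hΓ : 0 < Real.Gamma α := Real.Gamma_pos_of_pos hα0
  set CR := M * c0 * b ^ α / (Real.Gamma α * α) with hCR
  have hRb := Rfun_bound (Q := Q) (h := h) hα0 hb hQc hQb hh hc0
  have hRc := Rfun_continuousOn (Q := Q) (h := h) hα0 hα1 hb hQc hQb hh hc0
  refine continuousOn_of_holder hα0 (K := (1 / Real.Gamma α) * (2 * CR / α)) ?_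
  intro t ht s hs hts
  have key := holder_left hα0 hα1 hRc hRb ht hs hts
  have hrw : leftRLInt α (rightRLInt α b (fun u => Q u * h u)) t
      - leftRLInt α (rightRLInt α b (fun u => Q u * h u)) s
      = -((1 / Real.Gamma α)
        * ((∫ τ in (0:ℝ)..s, rightRLInt α b (fun u => Q u * h u) τ * (s - τ) ^ (α - 1))
          - ∫ τ in (0:ℝ)..t, rightRLInt α b (fun u => Q u * h u) τ * (t - τ) ^ (α - 1))) := by
    rw [leftRLInt, leftRLInt]; ring
  rw [hrw, abs_neg, abs_mul, abs_of_nonneg (by positivity : (0:ℝ) ≤ 1 / Real.Gamma α)]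
  calc (1 / Real.Gamma α)
        * |(∫ τ in (0:ℝ)..s, rightRLInt α b (fun u => Q u * h u) τ * (s - τ) ^ (α - 1))
          - ∫ τ in (0:ℝ)..t, rightRLInt α b (fun u => Q u * h u) τ * (t - τ) ^ (α - 1)|
      ≤ (1 / Real.Gamma α) * (2 * CR * ((s - t) ^ α / α)) :=
        mul_le_mul_of_nonneg_left key (by positivity)
    _ = (1 / Real.Gamma α) * (2 * CR / α) * (s - t) ^ α := by ring

lemma RL_congr {p1 p2 : ℝ → ℝ} (hp : ∀ u ∈ Icc (0:ℝ) b, p1 u = p2 u) {t : ℝ}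
    (ht : t ∈ Icc (0:ℝ) b) :
    leftRLInt α (fun s => rightRLInt α b p1 s) t
      = leftRLInt α (fun s => rightRLInt α b p2 s) t := by
  rw [leftRLInt, leftRLInt]
  congr 1
  apply intervalIntegral.integral_congr
  intro s hs
  have hs' : s ∈ Icc (0:ℝ) b := by
    rw [uIcc_of_le ht.1] at hs; exact ⟨hs.1, le_trans hs.2 ht.2⟩
  have hinner : rightRLInt α b p1 s = rightRLInt α b p2 s := by
    rw [rightRLInt, rightRLInt]
    congr 1
    apply intervalIntegral.integral_congr
    intro u hu
    have hu' : u ∈ Icc (0:ℝ) b := by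
      rw [uIcc_of_le hs'.2] at hu; exact ⟨le_trans hs'.1 hu.1, hu.2⟩
    simp only
    rw [hp u hu']
  simp only
  rw [hinner]

lemma A_sub (hα0 : 0 < α) (hα1 : α ≤ 1) (hb : 0 < b)
    (hQc : Continuous Q) (hQb : ∀ u, |Q u| ≤ M)
    {F G : ℝ → ℝ} {cF cG : ℝ} (hFc : Continuous F) (hFb : ∀ u, |F u| ≤ cF)
    (hGc : Continuous G) (hGb : ∀ u, |G u| ≤ cG) {t : ℝ} (ht : t ∈ Icc (0:ℝ) b) :
    leftRLInt α (rightRLInt α b (fun u => Q u * F u)) t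
      - leftRLInt α (rightRLInt α b (fun u => Q u * G u)) t
    = leftRLInt α (rightRLInt α b (fun u => Q u * (F u - G u))) t := by
  have hRsub : ∀ s : ℝ, rightRLInt α b (fun u => Q u * F u) s
      - rightRLInt α b (fun u => Q u * G u) s
      = rightRLInt α b (fun u => Q u * (F u - G u)) s := by
    intro s
    have IF : IntervalIntegrable (fun u => (Q u * F u) * (u - s) ^ (α - 1)) volume s b :=
      prod_int_right hα0 s (hQc.mul hFc).continuousOn
    have IG : IntervalIntegrable (fun u => (Q u * G u) * (u - s) ^ (α - 1)) volume s b :=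
      prod_int_right hα0 s (hQc.mul hGc).continuousOn
    rw [rightRLInt, rightRLInt, rightRLInt, ← mul_sub,
      ← intervalIntegral.integral_sub IF IG]
    congr 1
    apply intervalIntegral.integral_congr
    intro u _
    simp only
    ring
  have hRFc := Rfun_continuousOn (Q := Q) (h := F) hα0 hα1 hb hQc hQb hFc hFb
  have hRGc := Rfun_continuousOn (Q := Q) (h := G) hα0 hα1 hb hQc hQb hGc hGb
  have hsub : Set.uIcc (0:ℝ) t ⊆ Icc (0:ℝ) b := by
    rw [uIcc_of_le ht.1]; exact Icc_subset_Icc le_rfl ht.2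
  have ILF : IntervalIntegrable
      (fun τ => rightRLInt α b (fun u => Q u * F u) τ * (t - τ) ^ (α - 1)) volume 0 t :=
    prod_int_left hα0 t (hRFc.mono hsub)
  have ILG : IntervalIntegrable
      (fun τ => rightRLInt α b (fun u => Q u * G u) τ * (t - τ) ^ (α - 1)) volume 0 t :=
    prod_int_left hα0 t (hRGc.mono hsub)
  rw [leftRLInt, leftRLInt, leftRLInt, ← mul_sub, ← intervalIntegral.integral_sub ILF ILG]
  congr 1
  apply intervalIntegral.integral_congr
  intro τ _
  simp only
  rw [← sub_mul, hRsub τ]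
end aux

/-- If `M = sup_{[0,b]} |λ + q|` satisfies `M b^{2α}(1+1)/Γ(α+1)² < 1`, then the
integral equation has a unique continuous solution on `[0,b]` (fixed point of a
contraction on `C[0,b]`). -/
theorem integral_equation_unique_solution (α b L lam M : ℝ)
    (hα : α ∈ Set.Ioc (0:ℝ) 1) (hb : 0 < b) (q : ℝ → ℝ)
    (hq : ContinuousOn q (Set.Icc 0 b))
    (hM : IsLUB ((fun t => |lam + q t|) '' Set.Icc (0:ℝ) b) M)
    (hcontr : M * b ^ (2 * α) * (1 + 1) / (Real.Gamma (α + 1)) ^ 2 < 1) :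
    ∃ f : ℝ → ℝ, ContinuousOn f (Set.Icc 0 b) ∧
      (∀ t ∈ Set.Icc (0:ℝ) b,
        f t
          + leftRLInt α (fun s => rightRLInt α b (fun u => (lam + q u) * f u) s) t
          - (t / b) ^ α
              * leftRLInt α (fun s => rightRLInt α b (fun u => (lam + q u) * f u) s) b
        = L * (t / b) ^ α) ∧
      ∀ g : ℝ → ℝ, ContinuousOn g (Set.Icc 0 b) →
        (∀ t ∈ Set.Icc (0:ℝ) b,
          g t
            + leftRLInt α (fun s => rightRLInt α b (fun u => (lam + q u) * g u) s) t
            - (t / b) ^ α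
                * leftRLInt α (fun s => rightRLInt α b (fun u => (lam + q u) * g u) s) b
          = L * (t / b) ^ α) →
        ∀ t ∈ Set.Icc (0:ℝ) b, g t = f t := by
  obtain ⟨hα0, hα1⟩ := hα
  have hΓ1 : 0 < Real.Gamma (α + 1) := Real.Gamma_pos_of_pos (by linarith)
  have hbmem : b ∈ Icc (0:ℝ) b := ⟨hb.le, le_rfl⟩
  -- extended coefficient
  set qe : ℝ → ℝ := IccExtend hb.le ((Icc (0:ℝ) b).restrict q) with hqe_def
  have hqec : Continuous qe := hq.restrict.Icc_extend'
  have hqe_eq : ∀ u ∈ Icc (0:ℝ) b, qe u = q u := by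
    intro u hu
    rw [hqe_def, IccExtend_of_mem hb.le _ hu]
    rfl
  set Q : ℝ → ℝ := fun u => lam + qe u with hQ_def
  have hQc : Continuous Q := continuous_const.add hqec
  have hQb : ∀ u, |Q u| ≤ M := by
    intro u
    have hmem : ((projIcc (0:ℝ) b hb.le u : Icc (0:ℝ) b) : ℝ) ∈ Icc (0:ℝ) b :=
      (projIcc (0:ℝ) b hb.le u).2
    have hval : Q u = lam + q ((projIcc (0:ℝ) b hb.le u : Icc (0:ℝ) b) : ℝ) := rfl
    rw [hval]
    exact hM.1 (mem_image_of_mem _ hmem)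
  have hM0 : 0 ≤ M := le_trans (abs_nonneg _) (hQb 0)
  -- the Banach space
  set X := C(↥(Icc (0:ℝ) b), ℝ)
  have extc : ∀ f : X, Continuous (IccExtend hb.le ⇑f) := fun f => f.continuous.Icc_extend'
  have extb : ∀ (f : X) (u : ℝ), |IccExtend hb.le ⇑f u| ≤ ‖f‖ := by
    intro f u
    rw [IccExtend_apply]
    have := f.norm_coe_le_norm (projIcc (0:ℝ) b hb.le u)
    rwa [Real.norm_eq_abs] at this
  have extd : ∀ (f g : X) (u : ℝ),
      |IccExtend hb.le ⇑f u - IccExtend hb.le ⇑g u| ≤ dist f g := by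
    intro f g u
    rw [IccExtend_apply, IccExtend_apply]
    have := ContinuousMap.dist_apply_le_dist (f := f) (g := g) (projIcc (0:ℝ) b hb.le u)
    rwa [Real.dist_eq] at this
  -- the operator
  set A : (ℝ → ℝ) → ℝ → ℝ :=
    fun F => leftRLInt α (rightRLInt α b (fun u => Q u * F u)) with hA_def
  have hpow : Continuous (fun t : ℝ => (t / b) ^ α) := by
    rw [continuous_iff_continuousAt]
    intro x
    show ContinuousAt ((fun y : ℝ => y ^ α) ∘ (fun t : ℝ => t / b)) x
    exact ContinuousAt.comp (Real.continuousAt_rpow_const (x / b) α (Or.inr hα0.le))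
      (continuousAt_id.div_const b)
  set Φraw : X → ℝ → ℝ := fun f t =>
    L * (t / b) ^ α - A (IccExtend hb.le ⇑f) t + (t / b) ^ α * A (IccExtend hb.le ⇑f) b
    with hΦraw_def
  have hΦc : ∀ f : X, ContinuousOn (Φraw f) (Icc (0:ℝ) b) := by
    intro f
    have hAc : ContinuousOn (A (IccExtend hb.le ⇑f)) (Icc (0:ℝ) b) :=
      Afun_continuousOn hα0 hα1 hb hQc hQb (extc f) (extb f)
    exact (((continuous_const.mul hpow).continuousOn.sub hAc).add
      (hpow.continuousOn.mul continuousOn_const))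
  set Φ : X → X := fun f => ⟨(Icc (0:ℝ) b).restrict (Φraw f), (hΦc f).restrict⟩ with hΦ_def
  -- contraction estimate
  set K : ℝ := M * b ^ (2 * α) * (1 + 1) / (Real.Gamma (α + 1)) ^ 2 with hK_def
  have hK0 : 0 ≤ K := by positivity
  have hpow01 : ∀ t ∈ Icc (0:ℝ) b, (t / b) ^ α ∈ Icc (0:ℝ) 1 := by
    intro t ht
    constructor
    · exact Real.rpow_nonneg (div_nonneg ht.1 hb.le) _
    · exact Real.rpow_le_one (div_nonneg ht.1 hb.le) ((div_le_one hb).mpr ht.2) hα0.le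
  have hlip : ∀ f g : X, dist (Φ f) (Φ g) ≤ K * dist f g := by
    intro f g
    set F := IccExtend hb.le ⇑f
    set G := IccExtend hb.le ⇑g
    have hFGc : Continuous (fun u => F u - G u) := (extc f).sub (extc g)
    have hFGb : ∀ u, |F u - G u| ≤ dist f g := extd f g
    have hbnd := Afun_bound hα0 hα1 hb hQc hQb hFGc hFGb
    have hsubA : ∀ t ∈ Icc (0:ℝ) b, |A F t - A G t|
        ≤ M * dist f g * b ^ (2 * α) / (Real.Gamma (α + 1)) ^ 2 := by
      intro t ht
      rw [hA_def]
      rw [A_sub hα0 hα1 hb hQc hQb (extc f) (extb f) (extc g) (extb g) ht]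
      exact hbnd t ht
    rw [ContinuousMap.dist_le (by positivity)]
    intro x
    have hx : (x : ℝ) ∈ Icc (0:ℝ) b := x.2
    rw [Real.dist_eq]
    have hdiff : (Φ f) x - (Φ g) x
        = -(A F x - A G x) + ((x : ℝ) / b) ^ α * (A F b - A G b) := by
      show Φraw f x - Φraw g x = _
      rw [hΦraw_def]
      ring
    rw [hdiff]
    have h1 := hsubA x hx
    have h2 := hsubA b hbmem
    have h3 := hpow01 x hx
    calc |-(A F x - A G x) + ((x : ℝ) / b) ^ α * (A F b - A G b)|
        ≤ |-(A F x - A G x)| + |((x : ℝ) / b) ^ α * (A F b - A G b)| := abs_add_le _ _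
      _ = |A F x - A G x| + ((x : ℝ) / b) ^ α * |A F b - A G b| := by
          rw [abs_neg, abs_mul, abs_of_nonneg h3.1]
      _ ≤ M * dist f g * b ^ (2 * α) / (Real.Gamma (α + 1)) ^ 2
          + 1 * (M * dist f g * b ^ (2 * α) / (Real.Gamma (α + 1)) ^ 2) := by
          refine add_le_add h1 ?_
          refine mul_le_mul h3.2 h2 (abs_nonneg _) zero_le_one
      _ = K * dist f g := by rw [hK_def]; ring
  have hK1 : K < 1 := hcontr
  set κ : NNReal := ⟨K, hK0⟩ with hκ_def
  have hcw : ContractingWith κ Φ := by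
    constructor
    · exact_mod_cast hK1
    · exact LipschitzWith.of_dist_le_mul hlip
  set f0 : X := ContractingWith.fixedPoint Φ hcw with hf0_def
  have hfix : Φ f0 = f0 := hcw.fixedPoint_isFixedPt
  set F : ℝ → ℝ := IccExtend hb.le ⇑f0 with hF_def
  have hFmem : ∀ (u : ℝ) (hu : u ∈ Icc (0:ℝ) b), F u = f0 ⟨u, hu⟩ := by
    intro u hu
    rw [hF_def, IccExtend_of_mem hb.le _ hu]
  -- translation between statement form and operator form
  have htrans : ∀ (G : ℝ → ℝ), (∀ u ∈ Icc (0:ℝ) b, G u = F u) → ∀ t ∈ Icc (0:ℝ) b,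
      leftRLInt α (fun s => rightRLInt α b (fun u => (lam + q u) * G u) s) t
        = A F t := by
    intro G hG t ht
    have : ∀ u ∈ Icc (0:ℝ) b, (lam + q u) * G u = Q u * F u := by
      intro u hu
      rw [hG u hu, hQ_def]
      simp only
      rw [hqe_eq u hu]
    exact RL_congr this ht
  have hΦeval : ∀ (f : X) (t : ℝ) (ht : t ∈ Icc (0:ℝ) b),
      (Φ f) ⟨t, ht⟩ = Φraw f t := fun f t ht => rfl
  refine ⟨F, (extc f0).continuousOn, ?_, ?_⟩
  · intro t ht
    have h1 : F t = Φraw f0 t := by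
      conv_lhs => rw [hFmem t ht, ← hfix]
      exact hΦeval f0 t ht
    have h2 := htrans F (fun u _ => rfl) t ht
    have h3 := htrans F (fun u _ => rfl) b hbmem
    rw [h2, h3, h1, hΦraw_def]
    ring
  · intro g hgc hgeq t ht
    set g0 : X := ⟨(Icc (0:ℝ) b).restrict g, hgc.restrict⟩ with hg0_def
    set G : ℝ → ℝ := IccExtend hb.le ⇑g0 with hG_def
    have hGg : ∀ u ∈ Icc (0:ℝ) b, G u = g u := by
      intro u hu
      rw [hG_def, IccExtend_of_mem hb.le _ hu]
      rfl
    have htransG : ∀ s ∈ Icc (0:ℝ) b,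
        leftRLInt α (fun s' => rightRLInt α b (fun u => (lam + q u) * g u) s') s
          = A G s := by
      intro s hs
      have : ∀ u ∈ Icc (0:ℝ) b, (lam + q u) * g u = Q u * G u := by
        intro u hu
        rw [hGg u hu, hQ_def]
        simp only
        rw [hqe_eq u hu]
      exact RL_congr this hs
    have hfixg : Function.IsFixedPt Φ g0 := by
      apply ContinuousMap.ext
      intro x
      have hx : (x : ℝ) ∈ Icc (0:ℝ) b := x.2
      have heq := hgeq x hx
      rw [htransG x hx, htransG b hbmem] at heq
      have hΦx : (Φ g0) x = Φraw g0 x := rfl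
      have hg0x : (g0 x : ℝ) = g x := rfl
      rw [hΦx, hg0x, hΦraw_def]
      simp only
      rw [← hG_def]
      have hGx : G (x : ℝ) = g (x : ℝ) := hGg x hx
      linarith [heq]
    have hgf : g0 = f0 := hcw.fixedPoint_unique hfixg
    have : g t = g0 ⟨t, ht⟩ := rfl
    rw [this, hgf]
    exact (hFmem t ht).symm
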